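/- Let f, g : ℝ^D → ℝ^k be affine with linear parts A and C, and let y : ℝ^k be fixed. For ξ centered with covariance σ² I, the minimizer over affine g of E_ξ[‖f(x+ξ) − g(x+ξ)‖²] summed over a finite set of points {x₁,…,x_n} is achieved when g = f, and the objective value at any g equals ∑ᵢ ‖f(xᵢ) − g(xᵢ)‖² + n σ² ‖A − C‖_F². -/
import Mathlib

open MeasureTheory

lemma aux_int {D : ℕ} {Ω : Type*} [MeasurableSpace Ω] (μ : Measure Ω)
    [IsProbabilityMeasure μ] (σ : ℝ) (ξ : Ω → Fin D → ℝ)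
    (hmeanInt : ∀ j, Integrable (fun ω => ξ ω j) μ)
    (hmean : ∀ j, ∫ ω, ξ ω j ∂μ = 0)
    (hcovInt : ∀ i j, Integrable (fun ω => ξ ω i * ξ ω j) μ)
    (hcov : ∀ i j, ∫ ω, ξ ω i * ξ ω j ∂μ = σ ^ 2 * (if i = j then 1 else 0))
    (M : Fin D → ℝ) (c : ℝ) :
    ∫ ω, (c + ∑ j, M j * ξ ω j) ^ 2 ∂μ = c ^ 2 + σ ^ 2 * ∑ j, (M j) ^ 2 := by
  have hS : Integrable (fun ω => ∑ j, M j * ξ ω j) μ :=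
    integrable_finset_sum _ fun j _ => (hmeanInt j).const_mul _
  have hS2 : Integrable (fun ω => ∑ j, ∑ l, (M j * M l) * (ξ ω j * ξ ω l)) μ :=
    integrable_finset_sum _ fun j _ => integrable_finset_sum _ fun l _ =>
      (hcovInt j l).const_mul _
  have heq : (fun ω => (c + ∑ j, M j * ξ ω j) ^ 2)
      = fun ω => (c ^ 2 + (2 * c) * (∑ j, M j * ξ ω j))
        + ∑ j, ∑ l, (M j * M l) * (ξ ω j * ξ ω l) := by
    funext ω
    have h2 : (∑ j, M j * ξ ω j) ^ 2 = ∑ j, ∑ l, (M j * M l) * (ξ ω j * ξ ω l) := by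
      rw [sq, Finset.sum_mul_sum]
      exact Finset.sum_congr rfl fun j _ => Finset.sum_congr rfl fun l _ => by ring
    rw [add_sq, h2]
  have h1 : Integrable (fun ω => c ^ 2 + 2 * c * ∑ j, M j * ξ ω j) μ :=
    (integrable_const _).add (hS.const_mul _)
  have h0 : Integrable (fun _ : Ω => c ^ 2) μ := integrable_const _
  rw [heq, integral_add h1 hS2,
    integral_add h0 (hS.const_mul _), integral_const,
    integral_const_mul, integral_finset_sum _ (fun j _ => (hmeanInt j).const_mul _)]
  have hSint : (∑ j, ∫ ω, M j * ξ ω j ∂μ) = 0 := by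
    simp [integral_const_mul, hmean]
  rw [hSint, integral_finset_sum _ (fun j _ => integrable_finset_sum _
    fun l _ => (hcovInt j l).const_mul _)]
  have hdsum : (∑ j, ∫ ω, ∑ l, (M j * M l) * (ξ ω j * ξ ω l) ∂μ)
      = σ ^ 2 * ∑ j, (M j) ^ 2 := by
    rw [Finset.mul_sum]
    refine Finset.sum_congr rfl fun j _ => ?_
    rw [integral_finset_sum _ (fun l _ => (hcovInt j l).const_mul _)]
    simp [integral_const_mul, hcov, mul_ite, Finset.sum_ite_eq]
    ring
  rw [hdsum]
  simp

/-- Over a finite dataset `x₁, …, xₙ`, the noisy distillation objective for affine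
`f, g` (with linear parts `A, C` and centered noise with covariance `σ² I`) equals
`∑ᵢ ‖f(xᵢ) − g(xᵢ)‖² + n σ² ‖A − C‖_F²`, and is minimized by taking `g = f`. -/
theorem stmt_8 {D k n : ℕ} {Ω : Type*} [MeasurableSpace Ω] (μ : Measure Ω)
    [IsProbabilityMeasure μ]
    (A C : Matrix (Fin k) (Fin D) ℝ) (b d : Fin k → ℝ) (σ : ℝ)
    (f g : (Fin D → ℝ) → Fin k → ℝ)
    (hf : ∀ x i, f x i = (∑ j, A i j * x j) + b i)
    (hg : ∀ x i, g x i = (∑ j, C i j * x j) + d i)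
    (ξ : Ω → Fin D → ℝ)
    (hmeanInt : ∀ j, Integrable (fun ω => ξ ω j) μ)
    (hmean : ∀ j, ∫ ω, ξ ω j ∂μ = 0)
    (hcovInt : ∀ i j, Integrable (fun ω => ξ ω i * ξ ω j) μ)
    (hcov : ∀ i j, ∫ ω, ξ ω i * ξ ω j ∂μ = σ ^ 2 * (if i = j then 1 else 0))
    (x : Fin n → Fin D → ℝ) :
    (∑ p, ∫ ω, ∑ i, (f (x p + ξ ω) i - g (x p + ξ ω) i) ^ 2 ∂μ
        = (∑ p, ∑ i, (f (x p) i - g (x p) i) ^ 2)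
          + (n : ℝ) * σ ^ 2 * ∑ i, ∑ j, (A i j - C i j) ^ 2) ∧
    (∑ p, ∫ ω, ∑ i, (f (x p + ξ ω) i - f (x p + ξ ω) i) ^ 2 ∂μ
        ≤ ∑ p, ∫ ω, ∑ i, (f (x p + ξ ω) i - g (x p + ξ ω) i) ^ 2 ∂μ) := by
  have hdiff : ∀ p i ω, f (x p + ξ ω) i - g (x p + ξ ω) i
      = (f (x p) i - g (x p) i) + ∑ j, (A i j - C i j) * ξ ω j := by
    intro p i ω
    simp only [hf, hg, Pi.add_apply, mul_add, sub_mul, Finset.sum_add_distrib,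
      Finset.sum_sub_distrib]
    ring
  constructor
  · have : ∀ p, ∫ ω, ∑ i, (f (x p + ξ ω) i - g (x p + ξ ω) i) ^ 2 ∂μ
        = ∑ i, ((f (x p) i - g (x p) i) ^ 2 + σ ^ 2 * ∑ j, (A i j - C i j) ^ 2) := by
      intro p
      have hrw : (fun ω => ∑ i, (f (x p + ξ ω) i - g (x p + ξ ω) i) ^ 2)
          = fun ω => ∑ i, ((f (x p) i - g (x p) i) + ∑ j, (A i j - C i j) * ξ ω j) ^ 2 := by
        funext ω; exact Finset.sum_congr rfl fun i _ => by rw [hdiff]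
      rw [hrw, integral_finset_sum]
      · exact Finset.sum_congr rfl fun i _ =>
          aux_int μ σ ξ hmeanInt hmean hcovInt hcov _ _
      · intro i _
        have : (fun ω => ((f (x p) i - g (x p) i) + ∑ j, (A i j - C i j) * ξ ω j) ^ 2)
            = fun ω => ((f (x p) i - g (x p) i) ^ 2
              + (2 * (f (x p) i - g (x p) i)) * (∑ j, (A i j - C i j) * ξ ω j))
              + ∑ j, ∑ l, ((A i j - C i j) * (A i l - C i l)) * (ξ ω j * ξ ω l) := by
          funext ω
          have h2 : (∑ j, (A i j - C i j) * ξ ω j) ^ 2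
              = ∑ j, ∑ l, ((A i j - C i j) * (A i l - C i l)) * (ξ ω j * ξ ω l) := by
            rw [sq, Finset.sum_mul_sum]
            exact Finset.sum_congr rfl fun j _ => Finset.sum_congr rfl fun l _ => by ring
          rw [add_sq, h2]
        rw [this]
        exact (((integrable_const _).add ((integrable_finset_sum _
          fun j _ => (hmeanInt j).const_mul _).const_mul _))).add
          (integrable_finset_sum _ fun j _ => integrable_finset_sum _
            fun l _ => (hcovInt j l).const_mul _)
    simp only [this, Finset.sum_add_distrib]
    congr 1
    rw [Finset.sum_const, Finset.card_univ, Fintype.card_fin, nsmul_eq_mul,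
      ← Finset.mul_sum, ← mul_assoc]
  · have hL : ∀ p, ∫ ω, ∑ i, (f (x p + ξ ω) i - f (x p + ξ ω) i) ^ 2 ∂μ = 0 := by
      intro p; simp
    simp only [hL, Finset.sum_const, smul_zero]
    refine Finset.sum_nonneg fun p _ => integral_nonneg fun ω => ?_
    exact Finset.sum_nonneg fun i _ => sq_nonneg _
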